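/- (Concretization of Theorem 1.) Work in ℝ² (EuclideanSpace ℝ (Fin 2)) and let J : ℝ² → ℝ² be the rotation by π/2, J(x, y) = (−y, x). Let u be a user position, let s₁ ≠ u be the position of a ToA sensor and s₂ ≠ u the position of an AoA sensor, and let a, b > 0 be the Fisher information weights of the two measurements. Set r₁ = (s₁ − u)/‖s₁ − u‖ (the radial information direction of the ToA measurement) and t₂ = J(s₂ − u)/‖s₂ − u‖ (the tangential information direction of the AoA measurement). Then the infimum over unit vectors w of a·⟪r₁, w⟫² + b·⟪t₂, w⟫² is at most min(a, b), and it equals min(a, b) if and only if s₁ − u and s₂ − u are parallel (i.e., there exists a scalar λ with s₁ − u = λ·(s₂ − u)). In particular, for fixed sensor accuracies, the worst-direction Fisher information is maximized when the ToA and AoA sensors lie in the same direction from the user — i.e., an optimally placed pair of sensors is co-located, as a RIS providing both measurements is. -/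

import Mathlib

open scoped RealInnerProductSpace

lemma inner_two (x y : EuclideanSpace ℝ (Fin 2)) :
    ⟪x, y⟫ = x 0 * y 0 + x 1 * y 1 := by
  simp [PiLp.inner_apply, RCLike.inner_apply, Fin.sum_univ_two]; ring

lemma normsq_two (x : EuclideanSpace ℝ (Fin 2)) : ‖x‖ ^ 2 = x 0 ^ 2 + x 1 ^ 2 := by
  rw [← real_inner_self_eq_norm_sq, inner_two]; ring

lemma norm_eq_one_of (x : EuclideanSpace ℝ (Fin 2)) (h : x 0 ^ 2 + x 1 ^ 2 = 1) :
    ‖x‖ = 1 := by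
  have h2 := normsq_two x
  have h3 : (‖x‖ - 1) * (‖x‖ + 1) = 0 := by linear_combination h2 + h
  rcases mul_eq_zero.mp h3 with h4 | h4
  · linarith
  · linarith [norm_nonneg x]

/-- Concretization of Theorem 1: with `r₁` the radial information direction of a
ToA sensor at `s₁` and `t₂` the tangential information direction of an AoA sensor
at `s₂` (both relative to the user `u`), the worst-direction Fisher information
`inf_{‖w‖=1} a⟪r₁,w⟫² + b⟪t₂,w⟫²` is at most `min a b`, with equality exactly
when `s₁ − u` and `s₂ − u` are parallel, i.e. the two sensors are seen from the
user in the same direction (as for a co-located pair, e.g. a RIS). -/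
theorem ris_optimal_pair (J : EuclideanSpace ℝ (Fin 2) → EuclideanSpace ℝ (Fin 2))
    (hJ : ∀ p : EuclideanSpace ℝ (Fin 2), J p = ![-(p 1), p 0])
    (u s₁ s₂ : EuclideanSpace ℝ (Fin 2)) (h₁ : s₁ ≠ u) (h₂ : s₂ ≠ u)
    (a b : ℝ) (ha : 0 < a) (hb : 0 < b)
    (r₁ t₂ : EuclideanSpace ℝ (Fin 2))
    (hr₁ : r₁ = ‖s₁ - u‖⁻¹ • (s₁ - u))
    (ht₂ : t₂ = ‖s₂ - u‖⁻¹ • J (s₂ - u)) :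
    sInf {r : ℝ | ∃ w : EuclideanSpace ℝ (Fin 2), ‖w‖ = 1 ∧
        r = a * ⟪r₁, w⟫ ^ 2 + b * ⟪t₂, w⟫ ^ 2} ≤ min a b ∧
    (sInf {r : ℝ | ∃ w : EuclideanSpace ℝ (Fin 2), ‖w‖ = 1 ∧
        r = a * ⟪r₁, w⟫ ^ 2 + b * ⟪t₂, w⟫ ^ 2} = min a b ↔
      ∃ lam : ℝ, s₁ - u = lam • (s₂ - u)) := by
  set K := {r : ℝ | ∃ w : EuclideanSpace ℝ (Fin 2), ‖w‖ = 1 ∧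
      r = a * ⟪r₁, w⟫ ^ 2 + b * ⟪t₂, w⟫ ^ 2} with hK
  set v₁ := s₁ - u with hv₁
  set v₂ := s₂ - u with hv₂
  have hv₁ne : v₁ ≠ 0 := sub_ne_zero.mpr h₁
  have hv₂ne : v₂ ≠ 0 := sub_ne_zero.mpr h₂
  have hn₁ : (0:ℝ) < ‖v₁‖ := norm_pos_iff.mpr hv₁ne
  have hn₂ : (0:ℝ) < ‖v₂‖ := norm_pos_iff.mpr hv₂ne
  set c := ‖v₁‖⁻¹ * v₁ 0 with hcdef
  set d := ‖v₁‖⁻¹ * v₁ 1 with hddef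
  set e := ‖v₂‖⁻¹ * v₂ 0 with hedef
  set f := ‖v₂‖⁻¹ * v₂ 1 with hfdef
  have hr0 : r₁ 0 = c := by rw [hr₁]; rfl
  have hr1 : r₁ 1 = d := by rw [hr₁]; rfl
  have hJv : J v₂ = ![-(v₂ 1), v₂ 0] := hJ v₂
  have ht0 : t₂ 0 = -f := by
    rw [ht₂]
    show ‖v₂‖⁻¹ * (J v₂) 0 = -f
    rw [hJv]
    show ‖v₂‖⁻¹ * (-(v₂ 1)) = -f
    rw [hfdef]; ring
  have ht1 : t₂ 1 = e := by
    rw [ht₂]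
    show ‖v₂‖⁻¹ * (J v₂) 1 = e
    rw [hJv]
    show ‖v₂‖⁻¹ * (v₂ 0) = e
    rw [hedef]
  have hcd : c ^ 2 + d ^ 2 = 1 := by
    have h := normsq_two v₁
    have h2 : c ^ 2 + d ^ 2 = ‖v₁‖⁻¹ ^ 2 * (v₁ 0 ^ 2 + v₁ 1 ^ 2) := by
      rw [hcdef, hddef]; ring
    rw [h2, ← h, ← mul_pow, inv_mul_cancel₀ hn₁.ne']; norm_num
  have hef : e ^ 2 + f ^ 2 = 1 := by
    have h := normsq_two v₂
    have h2 : e ^ 2 + f ^ 2 = ‖v₂‖⁻¹ ^ 2 * (v₂ 0 ^ 2 + v₂ 1 ^ 2) := by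
      rw [hedef, hfdef]; ring
    rw [h2, ← h, ← mul_pow, inv_mul_cancel₀ hn₂.ne']; norm_num
  -- membership helper
  have hSmem : ∀ x y : ℝ, x ^ 2 + y ^ 2 = 1 →
      a * (c * x + d * y) ^ 2 + b * (-f * x + e * y) ^ 2 ∈ K := by
    intro x y hxy
    refine ⟨(!₂[x, y] : EuclideanSpace ℝ (Fin 2)), ?_, ?_⟩
    · exact norm_eq_one_of _ (by simpa using hxy)
    · rw [inner_two, inner_two, hr0, hr1, ht0, ht1]
      show a * (c * x + d * y) ^ 2 + b * (-f * x + e * y) ^ 2 =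
        a * (c * x + d * y) ^ 2 + b * (-f * x + e * y) ^ 2
      rfl
  set k := c * e + d * f with hkdef
  have hk : k ^ 2 + (c * f - d * e) ^ 2 = 1 := by
    rw [hkdef]; linear_combination (e ^ 2 + f ^ 2) * hcd + hef
  have hbdd : BddBelow K := by
    refine ⟨0, ?_⟩
    rintro r ⟨w, hw, rfl⟩
    positivity
  have hne : K.Nonempty := ⟨_, hSmem e f hef⟩
  have hS1 : sInf K ≤ a * k ^ 2 := by
    have hm : a * k ^ 2 ∈ K := by
      have h := hSmem e f hef
      have heq : a * (c * e + d * f) ^ 2 + b * (-f * e + e * f) ^ 2 = a * k ^ 2 := by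
        rw [hkdef]; ring
      rwa [heq] at h
    exact csInf_le hbdd hm
  have hS2 : sInf K ≤ b * k ^ 2 := by
    have hm : b * k ^ 2 ∈ K := by
      have h := hSmem (-d) c (by linarith only [hcd])
      have heq : a * (c * (-d) + d * c) ^ 2 + b * (-f * (-d) + e * c) ^ 2 = b * k ^ 2 := by
        rw [hkdef]; ring
      rwa [heq] at h
    exact csInf_le hbdd hm
  have hk2le : k ^ 2 ≤ 1 := by linarith only [hk, sq_nonneg (c * f - d * e)]
  have part1 : sInf K ≤ min a b := by
    exact le_min (hS1.trans (mul_le_of_le_one_right ha.le hk2le))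
      (hS2.trans (mul_le_of_le_one_right hb.le hk2le))
  -- parallel iff cross = 0
  have hpar_of : c * f - d * e = 0 → ∃ lam : ℝ, v₁ = lam • v₂ := by
    intro h
    rw [hcdef, hddef, hedef, hfdef] at h
    have hcr : v₁ 0 * v₂ 1 - v₁ 1 * v₂ 0 = 0 := by
      have h2 : ‖v₁‖⁻¹ * ‖v₂‖⁻¹ * (v₁ 0 * v₂ 1 - v₁ 1 * v₂ 0) = 0 := by
        linear_combination h
      have h3 : ‖v₁‖⁻¹ * ‖v₂‖⁻¹ ≠ 0 :=
        mul_ne_zero (inv_ne_zero hn₁.ne') (inv_ne_zero hn₂.ne')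
      exact (mul_eq_zero.mp h2).resolve_left h3
    have hv2c : v₂ 0 ≠ 0 ∨ v₂ 1 ≠ 0 := by
      by_contra hcon
      push_neg at hcon
      apply hv₂ne
      ext i
      fin_cases i
      · simpa using hcon.1
      · simpa using hcon.2
    rcases hv2c with h0 | h0
    · refine ⟨v₁ 0 / v₂ 0, ?_⟩
      ext i
      fin_cases i
      · show v₁ 0 = v₁ 0 / v₂ 0 * v₂ 0
        field_simp
      · show v₁ 1 = v₁ 0 / v₂ 0 * v₂ 1
        field_simp
        linear_combination -hcr
    · refine ⟨v₁ 1 / v₂ 1, ?_⟩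
      ext i
      fin_cases i
      · show v₁ 0 = v₁ 1 / v₂ 1 * v₂ 0
        field_simp
        linear_combination hcr
      · show v₁ 1 = v₁ 1 / v₂ 1 * v₂ 1
        field_simp
  have hcross_of : (∃ lam : ℝ, v₁ = lam • v₂) → c * f - d * e = 0 := by
    rintro ⟨lam, h⟩
    have h0 : v₁ 0 = lam * v₂ 0 := by rw [h]; rfl
    have h1 : v₁ 1 = lam * v₂ 1 := by rw [h]; rfl
    rw [hcdef, hddef, hedef, hfdef, h0, h1]; ring
  refine ⟨part1, ?_, ?_⟩
  · -- sInf = min → parallel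
    intro heq
    by_contra hno
    have hm : c * f - d * e ≠ 0 := fun h => hno (hpar_of h)
    have hmpos : 0 < (c * f - d * e) ^ 2 := by positivity
    have hk2lt : k ^ 2 < 1 := by linarith only [hk, hmpos]
    rcases le_total a b with h | h
    · rw [min_eq_left h] at heq
      have h5 : a * k ^ 2 < a := mul_lt_of_lt_one_right ha hk2lt
      linarith only [hS1, h5, heq]
    · rw [min_eq_right h] at heq
      have h5 : b * k ^ 2 < b := mul_lt_of_lt_one_right hb hk2lt
      linarith only [hS2, h5, heq]
  · -- parallel → sInf = min
    intro hpar
    have hm : c * f - d * e = 0 := hcross_of hpar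
    have hk2 : k ^ 2 = 1 := by linear_combination hk - (c * f - d * e) * hm
    have hc : c = k * e := by
      rw [hkdef]; linear_combination f * hm + (-c) * hef
    have hd : d = k * f := by
      rw [hkdef]; linear_combination (-e) * hm + (-d) * hef
    refine le_antisymm part1 (le_csInf hne ?_)
    rintro r ⟨w, hw, rfl⟩
    have hw2 : w 0 ^ 2 + w 1 ^ 2 = 1 := by
      have := normsq_two w
      rw [hw] at this
      linarith only [this]
    have hx : ⟪r₁, w⟫ = c * w 0 + d * w 1 := by rw [inner_two, hr0, hr1]
    have hy : ⟪t₂, w⟫ = -f * w 0 + e * w 1 := by rw [inner_two, ht0, ht1]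
    rw [hx, hy]
    have hxy1 : (c * w 0 + d * w 1) ^ 2 + (-f * w 0 + e * w 1) ^ 2 = 1 := by
      rw [hc, hd]
      linear_combination (e * w 0 + f * w 1) ^ 2 * hk2 + (w 0 ^ 2 + w 1 ^ 2) * hef + hw2
    rcases le_total a b with h | h
    · rw [min_eq_left h]
      have h1 : a * (-f * w 0 + e * w 1) ^ 2 ≤ b * (-f * w 0 + e * w 1) ^ 2 :=
        mul_le_mul_of_nonneg_right h (sq_nonneg _)
      have h2 : a * (c * w 0 + d * w 1) ^ 2 + a * (-f * w 0 + e * w 1) ^ 2 = a := by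
        linear_combination a * hxy1
      linarith only [h1, h2]
    · rw [min_eq_right h]
      have h1 : b * (c * w 0 + d * w 1) ^ 2 ≤ a * (c * w 0 + d * w 1) ^ 2 :=
        mul_le_mul_of_nonneg_right h (sq_nonneg _)
      have h2 : b * (c * w 0 + d * w 1) ^ 2 + b * (-f * w 0 + e * w 1) ^ 2 = b := by
        linear_combination b * hxy1
      linarith only [h1, h2]
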